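/- arXiv:1108.3909 — 3 statements merged into one kernel-verified Lean document; each statement's English description precedes it below -/
import Mathlib

section
/- In a pointed regular protomodular category, given a morphism of short exact sequences (k, a, b) from 0 → K' → A' → B' → 0 to 0 → K → A → B → 0, the left-hand square (the one formed by the kernel inclusions, k and a) is a pullback if and only if b is a monomorphism. -/
/-! Both kernels in the square are pulled back along `f'`: commutativity gives
`a⁻¹(ker f) = ker (f ∘ a) = ker (b ∘ f') = f'⁻¹(ker b)`, while `ker f' = f'⁻¹(1)`.
Since `f'` is surjective, pulling back along it is injective on subgroups, so the two
agree exactly when `ker b` is trivial. -/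

theorem MonoidHom.ker_eq_ker_comp_iff_injective {G N P : Type*} [Group G] [Group N]
    [MulOneClass P] {f : G →* N} (hf : Function.Surjective f) (g : N →* P) :
    f.ker = (g.comp f).ker ↔ Function.Injective g := by
  rw [← MonoidHom.comap_bot, ← MonoidHom.comap_ker, (Subgroup.comap_injective hf).eq_iff,
    eq_comm, MonoidHom.ker_eq_bot_iff]

theorem left_square_pullback_iff_mono_general
    {A' B' A B : Type*} [Group A'] [Group B'] [Group A] [Group B]
    (f' : A' →* B') (f : A →* B) (a : A' →* A) (b : B' →* B)
    (hf' : Function.Surjective f')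
    (hcomm : f.comp a = b.comp f') :
    f'.ker = f.ker.comap a ↔ Function.Injective b := by
  rw [MonoidHom.comap_ker, hcomm]
  exact MonoidHom.ker_eq_ker_comp_iff_injective hf' b

/-- In the category of groups (a pointed regular protomodular category), given
a morphism `(a, b)` of short exact sequences `0 → ker f' → A' → B' → 0` and
`0 → ker f → A → B → 0`, the left-hand square (formed by the kernel inclusions,
the restriction of `a` and `a`) is a pullback — i.e. `ker f' = a⁻¹(ker f)` —
if and only if `b` is a monomorphism. -/
theorem left_square_pullback_iff_mono
    {A' B' A B : Type*} [Group A'] [Group B'] [Group A] [Group B]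
    (f' : A' →* B') (f : A →* B) (a : A' →* A) (b : B' →* B)
    (hf' : Function.Surjective f') (hf : Function.Surjective f)
    (hcomm : f.comp a = b.comp f') :
    f'.ker = f.ker.comap a ↔ Function.Injective b :=
  left_square_pullback_iff_mono_general f' f a b hf' hcomm
end

section
/- A finitely complete pointed category 𝒜 is unital (the product injections D → D × C and C → D × C are jointly strongly epimorphic for all objects C, D) if, whenever c : X → C and d : X → D are strong epimorphisms whose kernels ker d and ker c are jointly strongly epimorphic, the induced morphism ⟨d, c⟩ : X → D × C is a strong epimorphism. Conversely, if 𝒜 is unital then this latter condition holds. -/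
open CategoryTheory CategoryTheory.Limits

/-- A pair of morphisms with common codomain is jointly strongly epimorphic if
they do not both factor through any proper subobject: any monomorphism through
which both factor is an isomorphism. -/
def JointlyStrongEpi {C : Type*} [Category C] {X Y Z : C}
    (f : X ⟶ Z) (g : Y ⟶ Z) : Prop :=
  ∀ ⦃S : C⦄ (m : S ⟶ Z), Mono m → (∃ u, u ≫ m = f) → (∃ v, v ≫ m = g) → IsIso m

/-- A finitely complete pointed category is unital: for all objects `C`, `D`,
the product injections `D → D × C` and `C → D × C` are jointly strongly
epimorphic. -/
def IsUnital (C : Type*) [Category C] [HasZeroObject C] [HasZeroMorphisms C]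
    [HasFiniteLimits C] : Prop :=
  ∀ D E : C, JointlyStrongEpi (prod.lift (𝟙 D) (0 : D ⟶ E))
    (prod.lift (0 : E ⟶ D) (𝟙 E))

/-!
In a finitely complete category a morphism is a strong epimorphism as soon as it factors
through no proper subobject, so by unitality it suffices that every mono `m` through which
`⟨d, c⟩` factors contains both product injections. Restricted to `ker c`, the pairing
`⟨d, c⟩` is the first injection precomposed with `ker c ≫ d`, and this composite is a strong
epimorphism: pulling a mono `n` back along `d`, both kernels factor through the pullback,
which is hence all of `X`, so `d` factors through `n`. Lifting against `m` then puts the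
first injection inside `m`, and symmetrically the second.

Conversely, the two projections `D ⨿ E → D` and `D ⨿ E → E` are split epimorphisms whose
kernels contain the coproduct injections, so their pairing `D ⨿ E → D × E` is a strong
epimorphism; it factors through any mono containing both product injections.
-/

section

variable {C : Type*} [Category C]

section JointlyStrongEpi

variable {X Y Z : C} {f : X ⟶ Z} {g : Y ⟶ Z}

theorem JointlyStrongEpi.symm (h : JointlyStrongEpi f g) : JointlyStrongEpi g f :=
  fun _ m hm hg hf => h m hm hf hg

theorem JointlyStrongEpi.of_fac {X' Y' : C} {f' : X' ⟶ Z} {g' : Y' ⟶ Z}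
    (h : JointlyStrongEpi f' g') (a : X' ⟶ X) (b : Y' ⟶ Y) (ha : a ≫ f = f')
    (hb : b ≫ g = g') : JointlyStrongEpi f g := by
  rintro S m hm ⟨u, hu⟩ ⟨v, hv⟩
  exact h m hm ⟨a ≫ u, by rw [Category.assoc, hu, ha]⟩ ⟨b ≫ v, by rw [Category.assoc, hv, hb]⟩

theorem JointlyStrongEpi.exists_lift [HasPullbacks C] (h : JointlyStrongEpi f g)
    {S W : C} {m : S ⟶ W} [Mono m] {v : Z ⟶ W} (hf : ∃ u, u ≫ m = f ≫ v)
    (hg : ∃ u, u ≫ m = g ≫ v) : ∃ s, s ≫ m = v := by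
  obtain ⟨u, hu⟩ := hf
  obtain ⟨u', hu'⟩ := hg
  have : IsIso (pullback.fst v m) :=
    h _ inferInstance ⟨pullback.lift f u hu.symm, pullback.lift_fst _ _ _⟩
      ⟨pullback.lift g u' hu'.symm, pullback.lift_fst _ _ _⟩
  exact ⟨inv (pullback.fst v m) ≫ pullback.snd v m, by simp [pullback.condition]⟩

theorem jointlyStrongEpi_coprod_inl_inr (X Y : C) [HasBinaryCoproduct X Y] :
    JointlyStrongEpi (coprod.inl : X ⟶ X ⨿ Y) coprod.inr := by
  rintro S m hm ⟨u, hu⟩ ⟨v, hv⟩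
  have : IsSplitEpi m := ⟨⟨⟨coprod.desc u v, by ext <;> simp [hu, hv]⟩⟩⟩
  exact isIso_of_mono_of_isSplitEpi m

end JointlyStrongEpi

instance isSplitEpi_coprod_desc_id_zero [HasZeroMorphisms C] (X Y : C) [HasBinaryCoproduct X Y] :
    IsSplitEpi (coprod.desc (𝟙 X) (0 : Y ⟶ X)) :=
  ⟨⟨⟨coprod.inl, coprod.inl_desc _ _⟩⟩⟩

instance isSplitEpi_coprod_desc_zero_id [HasZeroMorphisms C] (X Y : C) [HasBinaryCoproduct X Y] :
    IsSplitEpi (coprod.desc (0 : X ⟶ Y) (𝟙 Y)) :=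
  ⟨⟨⟨coprod.inr, coprod.inr_desc _ _⟩⟩⟩

theorem strongEpi_of_forall_isIso [HasEqualizers C] [HasPullbacks C] {X Y : C} {f : X ⟶ Y}
    (hf : ∀ ⦃Z : C⦄ (p : X ⟶ Z) (i : Z ⟶ Y) (_ : p ≫ i = f) [Mono i], IsIso i) :
    StrongEpi f :=
  (extremalEpi_iff_strongEpi_of_hasPullbacks f).1 (ExtremalEpi.mk_of_hasEqualizers f hf)

theorem StrongEpi.exists_lift {X Y S Z : C} {p : X ⟶ Y} [StrongEpi p] {m : S ⟶ Z} [Mono m]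
    {u : X ⟶ S} {v : Y ⟶ Z} (h : u ≫ m = p ≫ v) : ∃ s, s ≫ m = v :=
  ⟨(CommSq.mk h).lift, CommSq.fac_right _⟩

section Kernels

variable [HasZeroMorphisms C]

theorem strongEpi_kernel_ι_comp [HasEqualizers C] [HasPullbacks C] {X D E : C}
    {d : X ⟶ D} {c : X ⟶ E} [StrongEpi d] [HasKernel d] [HasKernel c]
    (h : JointlyStrongEpi (kernel.ι d) (kernel.ι c)) : StrongEpi (kernel.ι c ≫ d) := by
  refine strongEpi_of_forall_isIso fun T w n hw _ => ?_
  obtain ⟨s, hs⟩ := h.exists_lift (m := n) (v := d) ⟨0, by simp⟩ ⟨w, hw⟩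
  exact ExtremalEpi.isIso d s n hs

theorem jointlyStrongEpi_kernel_ι_coprod_desc (D E : C) [HasBinaryCoproduct D E]
    [HasKernel (coprod.desc (𝟙 D) (0 : E ⟶ D))] [HasKernel (coprod.desc (0 : D ⟶ E) (𝟙 E))] :
    JointlyStrongEpi (kernel.ι (coprod.desc (𝟙 D) (0 : E ⟶ D)))
      (kernel.ι (coprod.desc (0 : D ⟶ E) (𝟙 E))) :=
  (jointlyStrongEpi_coprod_inl_inr D E).symm.of_fac
    (kernel.lift (coprod.desc (𝟙 D) 0) coprod.inr (coprod.inr_desc _ _))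
    (kernel.lift (coprod.desc 0 (𝟙 E)) coprod.inl (coprod.inl_desc _ _))
    (kernel.lift_ι _ _ _) (kernel.lift_ι _ _ _)

end Kernels

end

/-- A finitely complete pointed category (with finite coproducts) is unital
if and only if: for any pair of strong epimorphisms `d : X ⟶ D`, `c : X ⟶ C`
whose kernels `ker d`, `ker c` are jointly strongly epimorphic, the induced
morphism `⟨d, c⟩ : X ⟶ D × C` is a strong epimorphism. -/
theorem unital_iff_strong_epi_pairing (C : Type*) [Category C]
    [HasZeroObject C] [HasZeroMorphisms C] [HasFiniteLimits C]
    [HasFiniteCoproducts C] :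
    IsUnital C ↔
      ∀ (X D E : C) (d : X ⟶ D) (c : X ⟶ E),
        StrongEpi d → StrongEpi c →
        JointlyStrongEpi (kernel.ι d) (kernel.ι c) →
        StrongEpi (prod.lift d c) := by
  constructor
  · intro hu X D E d c _ _ hker
    have : StrongEpi (kernel.ι c ≫ d) := strongEpi_kernel_ι_comp hker
    have : StrongEpi (kernel.ι d ≫ c) := strongEpi_kernel_ι_comp hker.symm
    refine strongEpi_of_forall_isIso fun S t m ht _ => hu D E m inferInstance ?_ ?_
    · exact StrongEpi.exists_lift (p := kernel.ι c ≫ d) (u := kernel.ι c ≫ t)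
        (by ext <;> simp [ht])
    · exact StrongEpi.exists_lift (p := kernel.ι d ≫ c) (u := kernel.ι d ≫ t)
        (by ext <;> simp [ht])
  · rintro h D E S m hm ⟨u, hu⟩ ⟨v, hv⟩
    have : StrongEpi (prod.lift (coprod.desc (𝟙 D) 0) (coprod.desc 0 (𝟙 E))) :=
      h _ _ _ _ _ inferInstance inferInstance (jointlyStrongEpi_kernel_ι_coprod_desc D E)
    exact ExtremalEpi.isIso (prod.lift (coprod.desc (𝟙 D) 0) (coprod.desc 0 (𝟙 E)))
      (coprod.desc u v) m
      (by ext <;> simp [reassoc_of% hu, reassoc_of% hv, coprod.inl_desc, coprod.inr_desc])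
end

section
/- In a variety of Ω-groups 𝒜 with subvariety ℬ, if the relative commutator [−,−]_ℬ is stable under regular images (p[M,N]_ℬ = [pM, pN]_ℬ for all surjections p and normal subobjects M, N), then every abelian object of 𝒜 lies in ℬ. Concretely in the group-theoretic model: if a binary operation [−,−] on normal subgroups satisfies [M,N] ≤ M ∩ N, p[M,N] = [pM,pN] for surjective p, and the property that [A,A] = 1 characterizes membership in ℬ, then every abelian group object satisfies [A,A] = 1. -/
/-! The two coordinate copies `A × 1` and `1 × A` of `A` in `A × A` are disjoint normal subgroups,
so the commutator of them is trivial. The multiplication `π` maps each of them onto `A`, so by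
stability under the surjection `π` the commutator `[A, A]` is the image of a trivial subgroup. -/

namespace Subgroup

variable {G H K : Type*} [Group G] [Group H] [Group K]

theorem disjoint_top_prod_bot_bot_prod :
    Disjoint ((⊤ : Subgroup G).prod (⊥ : Subgroup H)) ((⊥ : Subgroup G).prod ⊤) :=
  disjoint_def.mpr fun ⟨_, hx₂⟩ ⟨hx₁, _⟩ => Prod.ext hx₁ hx₂

theorem map_top_prod_bot_eq_top (f : G × H →* K) (hf : Function.Surjective fun g => f (g, 1)) :
    ((⊤ : Subgroup G).prod (⊥ : Subgroup H)).map f = ⊤ :=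
  eq_top_iff.mpr fun k _ =>
    let ⟨g, hg⟩ := hf k
    ⟨(g, 1), mem_prod.mpr ⟨mem_top g, one_mem _⟩, hg⟩

theorem map_bot_prod_top_eq_top (f : G × H →* K) (hf : Function.Surjective fun h => f (1, h)) :
    ((⊥ : Subgroup G).prod (⊤ : Subgroup H)).map f = ⊤ :=
  eq_top_iff.mpr fun k _ =>
    let ⟨h, hh⟩ := hf k
    ⟨(1, h), mem_prod.mpr ⟨one_mem _, mem_top h⟩, hh⟩

end Subgroup

section StableCommutator

variable (c : ∀ (G : Type) [Group G], Subgroup G → Subgroup G → Subgroup G)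

theorem commutator_eq_bot_of_disjoint
    (hle : ∀ (G : Type) [Group G] (M N : Subgroup G),
      M.Normal → N.Normal → c G M N ≤ M ⊓ N)
    {G : Type} [Group G] {M N : Subgroup G} (hM : M.Normal) (hN : N.Normal)
    (hMN : Disjoint M N) : c G M N = ⊥ :=
  le_bot_iff.mp ((hle G M N hM hN).trans hMN.eq_bot.le)

theorem commutator_map_eq_bot_of_disjoint
    (hle : ∀ (G : Type) [Group G] (M N : Subgroup G),
      M.Normal → N.Normal → c G M N ≤ M ⊓ N)
    (hmap : ∀ (G H : Type) [Group G] [Group H] (p : G →* H),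
      Function.Surjective p → ∀ (M N : Subgroup G), M.Normal → N.Normal →
        Subgroup.map p (c G M N) = c H (Subgroup.map p M) (Subgroup.map p N))
    {G H : Type} [Group G] [Group H] (p : G →* H) (hp : Function.Surjective p)
    {M N : Subgroup G} (hM : M.Normal) (hN : N.Normal) (hMN : Disjoint M N) :
    c H (M.map p) (N.map p) = ⊥ := by
  rw [← hmap G H p hp M N hM hN, commutator_eq_bot_of_disjoint c hle hM hN hMN, Subgroup.map_bot]

end StableCommutator

/-- If a binary operation `c` on normal subgroups of groups satisfies
`c M N ≤ M ⊓ N` and is stable under regular images (`p (c M N) = c (p M) (p N)`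
for surjective `p`), then every abelian group object `A` (one admitting a
multiplication homomorphism `π : A × A → A` with `π(a,1) = a = π(1,a)`)
satisfies `c A A = 1`. -/
theorem abelian_in_birkhoff_of_stable
    (c : ∀ (G : Type) [Group G], Subgroup G → Subgroup G → Subgroup G)
    (hle : ∀ (G : Type) [Group G] (M N : Subgroup G),
      M.Normal → N.Normal → c G M N ≤ M ⊓ N)
    (hmap : ∀ (G H : Type) [Group G] [Group H] (p : G →* H),
      Function.Surjective p → ∀ (M N : Subgroup G), M.Normal → N.Normal →
        Subgroup.map p (c G M N) = c H (Subgroup.map p M) (Subgroup.map p N))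
    (A : Type) [Group A] (π : A × A →* A)
    (hπ₁ : ∀ a : A, π (a, 1) = a) (hπ₂ : ∀ a : A, π (1, a) = a) :
    c A ⊤ ⊤ = ⊥ := by
  have hπ : Function.Surjective π := fun a => ⟨(a, 1), hπ₁ a⟩
  have h := commutator_map_eq_bot_of_disjoint c hle hmap π hπ
    (Subgroup.prod_normal ⊤ ⊥) (Subgroup.prod_normal ⊥ ⊤) Subgroup.disjoint_top_prod_bot_bot_prod
  rwa [Subgroup.map_top_prod_bot_eq_top π fun a => ⟨a, hπ₁ a⟩,
    Subgroup.map_bot_prod_top_eq_top π fun a => ⟨a, hπ₂ a⟩] at h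
end
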